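/- Let N ≥ 2 and, for each mode i ∈ {1, …, N}, let A_i ∈ ℂ^{n×n}, B_i ∈ ℂ^{n×m}, C_i ∈ ℂ^{p×n}, D_i ∈ ℂ^{p×m}, let γ_i > 0 be real, let P_i be an n×n complex Hermitian matrix, let Ψ_i be a 2×2 complex Hermitian matrix, and let Q_i be an n×n complex Hermitian positive definite matrix. Assume that for all i ≠ j the Hermitian matrix M_{ij} := [A_i B_i; I 0]* (Φ ⊗ P_i + Ψ_i ⊗ Q_i − Ψ_j ⊗ Q_j) [A_i B_i; I 0] + [C_i D_i; 0 I]* [[I_p, 0], [0, −γ_i² I_m]] [C_i D_i; 0 I] is negative definite. Let τ_0 < τ_1 < ⋯ < τ_K be real numbers and σ : {0, …, K−1} → {1, …, N} a switching sequence; let d : [τ_0, τ_K] → ℂᵐ be continuous and let x : [τ_0, τ_K] → ℂⁿ be continuous and, on each subinterval [τ_k, τ_{k+1}], continuously differentiable with x'(t) = A_{σ(k)} x(t) + B_{σ(k)} d(t); define z(t) := C_{σ(k)} x(t) + D_{σ(k)} d(t) for t ∈ [τ_k, τ_{k+1}). Suppose the frequency-dependent switching law holds: for every k, every mode j ∈ {1,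 …, N}, and every t ∈ [τ_k, τ_{k+1}], q_{Ψ_j,Q_j}(x'(t), x(t)) ≤ q_{Ψ_{σ(k)},Q_{σ(k)}}(x'(t), x(t)). Then ∫_{τ_0}^{τ_K} z(t)*z(t) dt ≤ (max_{1≤i≤N} γ_i²) · ∫_{τ_0}^{τ_K} d(t)*d(t) dt + Σ_{k=0}^{K−1} ( x(τ_k)*P_{σ(k)}x(τ_k) − x(τ_{k+1})*P_{σ(k)}x(τ_{k+1}) ). -/

import Mathlib

open Matrix Complex MeasureTheory
open scoped ComplexOrder

/-- The frequency-weighted quadratic form `q_{Ψ,Q}(u, v) = (u,v)* (Ψ ⊗ Q) (u,v)`. -/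
noncomputable def qForm {n : ℕ} (Ψ : Matrix (Fin 2) (Fin 2) ℂ)
    (Q : Matrix (Fin n) (Fin n) ℂ) (u v : Fin n → ℂ) : ℂ :=
  Ψ 0 0 * (star u ⬝ᵥ Q.mulVec u) + Ψ 0 1 * (star u ⬝ᵥ Q.mulVec v)
    + Ψ 1 0 * (star v ⬝ᵥ Q.mulVec u) + Ψ 1 1 * (star v ⬝ᵥ Q.mulVec v)

/-- The Kronecker product `Ψ ⊗ Q` of a 2×2 matrix with an n×n matrix, written
as a 2×2 block matrix. -/
noncomputable def kron2 {n : ℕ} (Ψ : Matrix (Fin 2) (Fin 2) ℂ)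
    (Q : Matrix (Fin n) (Fin n) ℂ) : Matrix (Fin n ⊕ Fin n) (Fin n ⊕ Fin n) ℂ :=
  Matrix.fromBlocks (Ψ 0 0 • Q) (Ψ 0 1 • Q) (Ψ 1 0 • Q) (Ψ 1 1 • Q)

/-- `Φ = [[0, 1], [1, 0]]`. -/
noncomputable def PhiMat : Matrix (Fin 2) (Fin 2) ℂ := !![0, 1; 1, 0]

/-- A complex matrix is negative definite if it is Hermitian and `v*Mv < 0` for
all `v ≠ 0`. -/
def NegDefinite {k : Type*} [Fintype k] (M : Matrix k k ℂ) : Prop :=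
  M.IsHermitian ∧ ∀ v : k → ℂ, v ≠ 0 → (star v ⬝ᵥ M.mulVec v).re < 0

/- ---------- auxiliary lemmas ---------- -/

lemma star_sum_elim {α : Type*} [Star α] {k l : ℕ} (u : Fin k → α) (v : Fin l → α) :
    star (Sum.elim u v) = Sum.elim (star u) (star v) := by
  funext i; cases i <;> rfl

lemma quad_kron2 {n : ℕ} (Ψ : Matrix (Fin 2) (Fin 2) ℂ) (Q : Matrix (Fin n) (Fin n) ℂ)
    (u v : Fin n → ℂ) :
    star (Sum.elim u v) ⬝ᵥ (kron2 Ψ Q) *ᵥ (Sum.elim u v) = qForm Ψ Q u v := by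
  simp [kron2, fromBlocks_mulVec, star_sum_elim, sumElim_dotProduct_sumElim, qForm,
    dotProduct_add, smul_mulVec, dotProduct_smul, smul_eq_mul]
  ring

lemma quad_conj {k l : Type*} [Fintype k] [Fintype l] (F : Matrix k l ℂ) (G : Matrix k k ℂ)
    (w : l → ℂ) :
    star w ⬝ᵥ (Fᴴ * G * F) *ᵥ w = star (F *ᵥ w) ⬝ᵥ G *ᵥ (F *ᵥ w) := by
  rw [← mulVec_mulVec, ← mulVec_mulVec, dotProduct_mulVec, ← star_mulVec, dotProduct_mulVec,
    ← dotProduct_mulVec]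

lemma key_pointwise {n m p : ℕ}
    (A : Matrix (Fin n) (Fin n) ℂ) (B : Matrix (Fin n) (Fin m) ℂ)
    (C : Matrix (Fin p) (Fin n) ℂ) (D : Matrix (Fin p) (Fin m) ℂ)
    (γ : ℝ) (Pm : Matrix (Fin n) (Fin n) ℂ) (Ψi Ψj : Matrix (Fin 2) (Fin 2) ℂ)
    (Qi Qj : Matrix (Fin n) (Fin n) ℂ)
    (hM : NegDefinite
      ((Matrix.fromBlocks A B (1 : Matrix (Fin n) (Fin n) ℂ) (0 : Matrix (Fin n) (Fin m) ℂ))ᴴ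
          * (kron2 PhiMat Pm + kron2 Ψi Qi - kron2 Ψj Qj)
          * Matrix.fromBlocks A B (1 : Matrix (Fin n) (Fin n) ℂ) (0 : Matrix (Fin n) (Fin m) ℂ)
        + (Matrix.fromBlocks C D (0 : Matrix (Fin m) (Fin n) ℂ) (1 : Matrix (Fin m) (Fin m) ℂ))ᴴ
            * Matrix.fromBlocks (1 : Matrix (Fin p) (Fin p) ℂ) (0 : Matrix (Fin p) (Fin m) ℂ)
                (0 : Matrix (Fin m) (Fin p) ℂ) (-((γ : ℂ) ^ 2) • (1 : Matrix (Fin m) (Fin m) ℂ))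
            * Matrix.fromBlocks C D (0 : Matrix (Fin m) (Fin n) ℂ) (1 : Matrix (Fin m) (Fin m) ℂ)))
    (xt : Fin n → ℂ) (dt : Fin m → ℂ) :
    (qForm PhiMat Pm (A *ᵥ xt + B *ᵥ dt) xt).re
      + (qForm Ψi Qi (A *ᵥ xt + B *ᵥ dt) xt).re
      - (qForm Ψj Qj (A *ᵥ xt + B *ᵥ dt) xt).re
      + (star (C *ᵥ xt + D *ᵥ dt) ⬝ᵥ (C *ᵥ xt + D *ᵥ dt)).re
      - γ ^ 2 * (star dt ⬝ᵥ dt).re ≤ 0 := by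
  set u := A *ᵥ xt + B *ᵥ dt with hu
  set zv := C *ᵥ xt + D *ᵥ dt with hzv
  set w : Fin n ⊕ Fin m → ℂ := Sum.elim xt dt with hw
  set F := Matrix.fromBlocks A B (1 : Matrix (Fin n) (Fin n) ℂ) (0 : Matrix (Fin n) (Fin m) ℂ)
  set H := Matrix.fromBlocks C D (0 : Matrix (Fin m) (Fin n) ℂ) (1 : Matrix (Fin m) (Fin m) ℂ)
  set G := kron2 PhiMat Pm + kron2 Ψi Qi - kron2 Ψj Qj
  set J := Matrix.fromBlocks (1 : Matrix (Fin p) (Fin p) ℂ) (0 : Matrix (Fin p) (Fin m) ℂ)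
      (0 : Matrix (Fin m) (Fin p) ℂ) (-((γ : ℂ) ^ 2) • (1 : Matrix (Fin m) (Fin m) ℂ))
  have hFw : F *ᵥ w = Sum.elim u xt := by
    simp [F, hw, fromBlocks_mulVec, Sum.elim_comp_inl, Sum.elim_comp_inr, hu]
  have hHw : H *ᵥ w = Sum.elim zv dt := by
    simp [H, hw, fromBlocks_mulVec, Sum.elim_comp_inl, Sum.elim_comp_inr, hzv]
  have hquad : star w ⬝ᵥ (Fᴴ * G * F + Hᴴ * J * H) *ᵥ w
      = qForm PhiMat Pm u xt + qForm Ψi Qi u xt - qForm Ψj Qj u xt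
        + (star zv ⬝ᵥ zv + (-((γ : ℂ) ^ 2)) * (star dt ⬝ᵥ dt)) := by
    rw [add_mulVec, dotProduct_add, quad_conj, quad_conj, hFw, hHw]
    congr 1
    · simp only [G, add_mulVec, sub_mulVec, dotProduct_add, dotProduct_sub, quad_kron2]
    · rw [show J *ᵥ Sum.elim zv dt = Sum.elim zv ((-((γ : ℂ) ^ 2)) • dt) by
        simp [J, fromBlocks_mulVec, Sum.elim_comp_inl, Sum.elim_comp_inr, smul_mulVec,
          neg_mulVec, Matrix.one_mulVec]]
      rw [star_sum_elim, sumElim_dotProduct_sumElim, dotProduct_smul, smul_eq_mul]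
  have hle : (star w ⬝ᵥ (Fᴴ * G * F + Hᴴ * J * H) *ᵥ w).re ≤ 0 := by
    by_cases hw0 : w = 0
    · simp [hw0]
    · exact le_of_lt (hM.2 w hw0)
  rw [hquad] at hle
  have hγ : ((-((γ : ℂ) ^ 2)) * (star dt ⬝ᵥ dt)).re = -(γ ^ 2 * (star dt ⬝ᵥ dt).re) := by
    have : (-((γ : ℂ) ^ 2)) = ((-(γ ^ 2) : ℝ) : ℂ) := by push_cast; ring
    rw [this]
    simp [Complex.mul_re, ← Complex.ofReal_pow]
  simp only [Complex.add_re, Complex.sub_re, hγ] at hle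
  linarith

lemma hasDeriv_quad {n : ℕ} (P : Matrix (Fin n) (Fin n) ℂ) {x : ℝ → Fin n → ℂ}
    {u : Fin n → ℂ} {s : Set ℝ} {t : ℝ}
    (hx : HasDerivWithinAt x u s t) :
    HasDerivWithinAt (fun r => star (x r) ⬝ᵥ P *ᵥ x r)
      (star u ⬝ᵥ P *ᵥ x t + star (x t) ⬝ᵥ P *ᵥ u) s t := by
  have hxi : ∀ i, HasDerivWithinAt (fun r => x r i) (u i) s t := fun i =>
    ((ContinuousLinearMap.proj (R := ℝ) (φ := fun _ : Fin n => ℂ)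
      i).hasFDerivAt).comp_hasDerivWithinAt t hx
  have key : ∀ i : Fin n, HasDerivWithinAt
      (fun r => star (x r i) * (∑ j, P i j * x r j))
      (star (u i) * (∑ j, P i j * x t j) + star (x t i) * (∑ j, P i j * u j)) s t := by
    intro i
    exact ((hxi i).star).mul (HasDerivWithinAt.fun_sum fun j _ => (hxi j).const_mul (P i j))
  have hsum := HasDerivWithinAt.fun_sum (fun i (_ : i ∈ Finset.univ) => key i)
  convert hsum using 1
  · rfl
  · funext r; simp [dotProduct, mulVec, Pi.star_apply]
  rw [Finset.sum_add_distrib]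
  congr 1 <;> simp [dotProduct, mulVec, Pi.star_apply]

lemma contOn_mulVec {k l : ℕ} (M : Matrix (Fin k) (Fin l) ℂ) {f : ℝ → Fin l → ℂ} {s : Set ℝ}
    (hf : ContinuousOn f s) : ContinuousOn (fun t => M *ᵥ f t) s := by
  apply continuousOn_pi.2
  intro i
  simp only [mulVec, dotProduct]
  exact continuousOn_finset_sum _ fun j _ => continuousOn_const.mul (continuousOn_pi.1 hf j)

lemma contOn_dot {k : ℕ} {f g : ℝ → Fin k → ℂ} {s : Set ℝ}
    (hf : ContinuousOn f s) (hg : ContinuousOn g s) :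
    ContinuousOn (fun t => star (f t) ⬝ᵥ g t) s := by
  simp only [dotProduct, Pi.star_apply]
  exact continuousOn_finset_sum _ fun j _ =>
    ((continuousOn_pi.1 hf j).star).mul (continuousOn_pi.1 hg j)

lemma contOn_qForm {k : ℕ} (Ψ : Matrix (Fin 2) (Fin 2) ℂ) (Q : Matrix (Fin k) (Fin k) ℂ)
    {f g : ℝ → Fin k → ℂ} {s : Set ℝ}
    (hf : ContinuousOn f s) (hg : ContinuousOn g s) :
    ContinuousOn (fun t => qForm Ψ Q (f t) (g t)) s := by
  simp only [qForm]
  exact ((((continuousOn_const.mul (contOn_dot hf (contOn_mulVec Q hf))).add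
    (continuousOn_const.mul (contOn_dot hf (contOn_mulVec Q hg)))).add
    (continuousOn_const.mul (contOn_dot hg (contOn_mulVec Q hf)))).add
    (continuousOn_const.mul (contOn_dot hg (contOn_mulVec Q hg))))

lemma re_star_dot_nonneg {k : ℕ} (v : Fin k → ℂ) : 0 ≤ (star v ⬝ᵥ v).re := by
  simp only [dotProduct, Pi.star_apply, Complex.re_sum]
  apply Finset.sum_nonneg
  intro i _
  rw [show star (v i) * v i = (Complex.normSq (v i) : ℂ) by
    simp [Complex.normSq_eq_conj_mul_self]]
  simp [Complex.normSq_nonneg]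

/-- Transient disturbance-attenuation bound for the closed-loop switched system under
frequency-dependent switching control: on `[τ₀, τ_K]`, the output energy is bounded by
`(max_i γ_i²)` times the disturbance energy plus the telescoping switching residue. -/
theorem fdsc_transient_disturbance_attenuation {n m p N K : ℕ}
    (hN : 2 ≤ N) (hK : 0 < K)
    (A : Fin N → Matrix (Fin n) (Fin n) ℂ) (B : Fin N → Matrix (Fin n) (Fin m) ℂ)
    (C : Fin N → Matrix (Fin p) (Fin n) ℂ) (D : Fin N → Matrix (Fin p) (Fin m) ℂ)
    (γ : Fin N → ℝ) (hγ : ∀ i, 0 < γ i)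
    (P : Fin N → Matrix (Fin n) (Fin n) ℂ) (hP : ∀ i, (P i).IsHermitian)
    (Ψ : Fin N → Matrix (Fin 2) (Fin 2) ℂ) (hΨ : ∀ i, (Ψ i).IsHermitian)
    (Q : Fin N → Matrix (Fin n) (Fin n) ℂ) (hQ : ∀ i, (Q i).PosDef)
    (hM : ∀ i j : Fin N, i ≠ j → NegDefinite
      ((Matrix.fromBlocks (A i) (B i)
            (1 : Matrix (Fin n) (Fin n) ℂ) (0 : Matrix (Fin n) (Fin m) ℂ))ᴴ
          * (kron2 PhiMat (P i) + kron2 (Ψ i) (Q i) - kron2 (Ψ j) (Q j))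
          * Matrix.fromBlocks (A i) (B i)
              (1 : Matrix (Fin n) (Fin n) ℂ) (0 : Matrix (Fin n) (Fin m) ℂ)
        + (Matrix.fromBlocks (C i) (D i)
              (0 : Matrix (Fin m) (Fin n) ℂ) (1 : Matrix (Fin m) (Fin m) ℂ))ᴴ
            * Matrix.fromBlocks (1 : Matrix (Fin p) (Fin p) ℂ) (0 : Matrix (Fin p) (Fin m) ℂ)
                (0 : Matrix (Fin m) (Fin p) ℂ)
                (-((γ i : ℂ) ^ 2) • (1 : Matrix (Fin m) (Fin m) ℂ))
            * Matrix.fromBlocks (C i) (D i)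
                (0 : Matrix (Fin m) (Fin n) ℂ) (1 : Matrix (Fin m) (Fin m) ℂ)))
    (τ : Fin (K + 1) → ℝ) (hτ : StrictMono τ)
    (σ : Fin K → Fin N)
    (d : ℝ → Fin m → ℂ) (hd : ContinuousOn d (Set.Icc (τ 0) (τ (Fin.last K))))
    (x : ℝ → Fin n → ℂ) (hxc : ContinuousOn x (Set.Icc (τ 0) (τ (Fin.last K))))
    (hderiv : ∀ k : Fin K, ∀ t ∈ Set.Icc (τ k.castSucc) (τ k.succ),
      HasDerivWithinAt x ((A (σ k)).mulVec (x t) + (B (σ k)).mulVec (d t))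
        (Set.Icc (τ k.castSucc) (τ k.succ)) t)
    (z : ℝ → Fin p → ℂ)
    (hz : ∀ k : Fin K, ∀ t ∈ Set.Ico (τ k.castSucc) (τ k.succ),
      z t = (C (σ k)).mulVec (x t) + (D (σ k)).mulVec (d t))
    (hsw : ∀ k : Fin K, ∀ j : Fin N, ∀ t ∈ Set.Icc (τ k.castSucc) (τ k.succ),
      (qForm (Ψ j) (Q j)
          ((A (σ k)).mulVec (x t) + (B (σ k)).mulVec (d t)) (x t)).re
        ≤ (qForm (Ψ (σ k)) (Q (σ k))
            ((A (σ k)).mulVec (x t) + (B (σ k)).mulVec (d t)) (x t)).re) :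
    (∫ t in (τ 0)..(τ (Fin.last K)), (star (z t) ⬝ᵥ z t).re)
      ≤ (⨆ i : Fin N, γ i ^ 2) * (∫ t in (τ 0)..(τ (Fin.last K)), (star (d t) ⬝ᵥ d t).re)
        + ∑ k : Fin K,
            ((star (x (τ k.castSucc)) ⬝ᵥ (P (σ k)).mulVec (x (τ k.castSucc))).re
              - (star (x (τ k.succ)) ⬝ᵥ (P (σ k)).mulVec (x (τ k.succ))).re) := by
  -- notation
  set Zf : ℝ → ℝ := fun t => (star (z t) ⬝ᵥ z t).re with hZf
  set Df : ℝ → ℝ := fun t => (star (d t) ⬝ᵥ d t).re with hDf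
  -- per-interval facts
  have interval_key : ∀ k : Fin K,
      IntervalIntegrable Zf volume (τ k.castSucc) (τ k.succ) ∧
      (∫ t in (τ k.castSucc)..(τ k.succ), Zf t)
        ≤ γ (σ k) ^ 2 * (∫ t in (τ k.castSucc)..(τ k.succ), Df t)
          + ((star (x (τ k.castSucc)) ⬝ᵥ (P (σ k)).mulVec (x (τ k.castSucc))).re
              - (star (x (τ k.succ)) ⬝ᵥ (P (σ k)).mulVec (x (τ k.succ))).re) := by
    intro k
    set i := σ k with hi
    set a := τ k.castSucc with ha
    set b := τ k.succ with hb
    have hab : a ≤ b := (hτ (Fin.castSucc_lt_succ (i := k))).le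
    have hsub : Set.Icc a b ⊆ Set.Icc (τ 0) (τ (Fin.last K)) :=
      Set.Icc_subset_Icc (hτ.monotone (Fin.zero_le _)) (hτ.monotone (Fin.le_last _))
    have hx' : ContinuousOn x (Set.Icc a b) := hxc.mono hsub
    have hd' : ContinuousOn d (Set.Icc a b) := hd.mono hsub
    set u : ℝ → Fin n → ℂ := fun t => A i *ᵥ x t + B i *ᵥ d t with hu
    set zt : ℝ → Fin p → ℂ := fun t => C i *ᵥ x t + D i *ᵥ d t with hzt
    have hucont : ContinuousOn u (Set.Icc a b) :=
      (contOn_mulVec _ hx').add (contOn_mulVec _ hd')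
    have hztcont : ContinuousOn zt (Set.Icc a b) :=
      (contOn_mulVec _ hx').add (contOn_mulVec _ hd')
    set Vf : ℝ → ℝ := fun t => (star (x t) ⬝ᵥ (P i) *ᵥ x t).re with hVf
    set V' : ℝ → ℝ := fun t => (qForm PhiMat (P i) (u t) (x t)).re with hV'
    have hqPhi : ∀ um vm : Fin n → ℂ,
        qForm PhiMat (P i) um vm = star um ⬝ᵥ (P i) *ᵥ vm + star vm ⬝ᵥ (P i) *ᵥ um := by
      intro um vm
      simp [qForm, PhiMat]
    have hVderiv : ∀ t ∈ Set.Icc a b, HasDerivWithinAt Vf (V' t) (Set.Icc a b) t := by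
      intro t ht
      have h1 := hasDeriv_quad (P i) (hderiv k t ht)
      have h2 := (Complex.reCLM.hasFDerivAt).comp_hasDerivWithinAt t h1
      rw [← hi] at h2
      simpa [hVf, hV', hqPhi, hu, Function.comp_def, ha, hb] using h2
    have hVcont : ContinuousOn Vf (Set.Icc a b) :=
      fun t ht => (hVderiv t ht).continuousWithinAt
    have hV'cont : ContinuousOn V' (Set.Icc a b) :=
      Complex.continuous_re.comp_continuousOn (contOn_qForm _ _ hucont hx')
    have hV'int : IntervalIntegrable V' volume a b :=
      (by rwa [Set.uIcc_of_le hab] : ContinuousOn V' (Set.uIcc a b)).intervalIntegrable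
    have hFTC : ∫ t in a..b, V' t = Vf b - Vf a :=
      intervalIntegral.integral_eq_sub_of_hasDeriv_right_of_le hab hVcont
        (fun t ht => ((hVderiv t (Set.Ioo_subset_Icc_self ht)).hasDerivAt
          (Icc_mem_nhds ht.1 ht.2)).hasDerivWithinAt) hV'int
    -- a mode different from i
    have hNZ : (0 : ℕ) < N := by omega
    obtain ⟨j, hji⟩ : ∃ j : Fin N, j ≠ i := by
      by_cases h : i = ⟨0, hNZ⟩
      · exact ⟨⟨1, by omega⟩, by simp [h, Fin.ext_iff]⟩
      · exact ⟨⟨0, hNZ⟩, fun hc => h hc.symm⟩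
    -- pointwise inequality
    have hpt : ∀ t ∈ Set.Icc a b,
        V' t + (star (zt t) ⬝ᵥ zt t).re ≤ γ i ^ 2 * Df t := by
      intro t ht
      have hks := key_pointwise (A i) (B i) (C i) (D i) (γ i) (P i) (Ψ i) (Ψ j) (Q i) (Q j)
        (hM i j (Ne.symm hji)) (x t) (d t)
      have hsw' := hsw k j t ht
      simp only [hV', hu, hzt, hDf] at *
      linarith
    -- integrability of the pieces
    have hztq : ContinuousOn (fun t => (star (zt t) ⬝ᵥ zt t).re) (Set.Icc a b) :=
      Complex.continuous_re.comp_continuousOn (contOn_dot hztcont hztcont)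
    have hztint : IntervalIntegrable (fun t => (star (zt t) ⬝ᵥ zt t).re) volume a b :=
      (by rwa [Set.uIcc_of_le hab] :
        ContinuousOn (fun t => (star (zt t) ⬝ᵥ zt t).re) (Set.uIcc a b)).intervalIntegrable
    have hdq : ContinuousOn Df (Set.Icc a b) :=
      Complex.continuous_re.comp_continuousOn (contOn_dot hd' hd')
    have hdint : IntervalIntegrable Df volume a b :=
      (by rwa [Set.uIcc_of_le hab] : ContinuousOn Df (Set.uIcc a b)).intervalIntegrable
    -- integral inequality
    have hmono : (∫ t in a..b, (V' t + (star (zt t) ⬝ᵥ zt t).re))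
        ≤ ∫ t in a..b, γ i ^ 2 * Df t :=
      intervalIntegral.integral_mono_on hab (hV'int.add hztint) (hdint.const_mul _) hpt
    rw [intervalIntegral.integral_add hV'int hztint, hFTC,
      intervalIntegral.integral_const_mul] at hmono
    -- z agrees a.e. with zt on the interval
    have hb_ae : ∀ᵐ t : ℝ, t ≠ b := by
      rw [MeasureTheory.ae_iff]
      have : {t : ℝ | ¬t ≠ b} = {b} := by ext t; simp
      rw [this]
      exact Real.volume_singleton
    have hzeq : ∀ᵐ t ∂(volume : Measure ℝ), t ∈ Set.uIoc a b → Zf t = (star (zt t) ⬝ᵥ zt t).re := by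
      filter_upwards [hb_ae] with t htb hmem
      rw [Set.uIoc_of_le hab] at hmem
      have hIco : t ∈ Set.Ico a b := ⟨hmem.1.le, lt_of_le_of_ne hmem.2 htb⟩
      simp only [hZf, hz k t hIco, hzt, hi]
    have hIcongr : (∫ t in a..b, Zf t) = ∫ t in a..b, (star (zt t) ⬝ᵥ zt t).re :=
      intervalIntegral.integral_congr_ae hzeq
    have hzint : IntervalIntegrable Zf volume a b := by
      apply hztint.congr_ae
      filter_upwards [MeasureTheory.ae_restrict_mem measurableSet_uIoc,
        MeasureTheory.ae_restrict_of_ae hzeq] with t hmem heq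
      exact (heq hmem).symm
    refine ⟨hzint, ?_⟩
    rw [hIcongr]
    linarith
  -- split the total integrals over the adjacent subintervals
  set T : ℕ → ℝ := fun r => τ ⟨min r K, Nat.lt_succ_of_le (min_le_right r K)⟩ with hT
  have hTk : ∀ k : Fin K, T k.val = τ k.castSucc := by
    intro k
    simp only [hT]
    congr 1
    exact Fin.ext (by simp [Nat.min_eq_left k.isLt.le])
  have hTk1 : ∀ k : Fin K, T (k.val + 1) = τ k.succ := by
    intro k
    simp only [hT]
    congr 1
    exact Fin.ext (by simp [Nat.min_eq_left (Nat.succ_le_of_lt k.isLt)])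
  have hT0 : T 0 = τ 0 := by
    simp only [hT]; congr 1
  have hTK : T K = τ (Fin.last K) := by
    simp only [hT]; congr 1; exact Fin.ext (by simp [Fin.last])
  have hdint_all : ∀ k : Fin K, IntervalIntegrable Df volume (τ k.castSucc) (τ k.succ) := by
    intro k
    have hab : τ k.castSucc ≤ τ k.succ := (hτ (Fin.castSucc_lt_succ (i := k))).le
    have hsub : Set.Icc (τ k.castSucc) (τ k.succ) ⊆ Set.Icc (τ 0) (τ (Fin.last K)) :=
      Set.Icc_subset_Icc (hτ.monotone (Fin.zero_le _)) (hτ.monotone (Fin.le_last _))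
    refine ContinuousOn.intervalIntegrable ?_
    rw [Set.uIcc_of_le hab]
    exact Complex.continuous_re.comp_continuousOn (contOn_dot (hd.mono hsub) (hd.mono hsub))
  have hzadj : ∀ r < K, IntervalIntegrable Zf volume (T r) (T (r + 1)) := by
    intro r hr
    have h := (interval_key ⟨r, hr⟩).1
    rwa [← hTk ⟨r, hr⟩, ← hTk1 ⟨r, hr⟩] at h
  have hdadj : ∀ r < K, IntervalIntegrable Df volume (T r) (T (r + 1)) := by
    intro r hr
    have h := hdint_all ⟨r, hr⟩
    rwa [← hTk ⟨r, hr⟩, ← hTk1 ⟨r, hr⟩] at h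
  have hzsplit := intervalIntegral.sum_integral_adjacent_intervals hzadj
  have hdsplit := intervalIntegral.sum_integral_adjacent_intervals hdadj
  rw [hT0, hTK] at hzsplit hdsplit
  have hzfin : ∑ k : Fin K, (∫ t in (τ k.castSucc)..(τ k.succ), Zf t)
      = ∫ t in (τ 0)..(τ (Fin.last K)), Zf t := by
    calc ∑ k : Fin K, (∫ t in (τ k.castSucc)..(τ k.succ), Zf t)
        = ∑ k : Fin K, (fun r : ℕ => ∫ t in (T r)..(T (r + 1)), Zf t) k.val :=
          Finset.sum_congr rfl (fun k _ => by simp only [hTk, hTk1])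
      _ = ∑ r ∈ Finset.range K, ∫ t in (T r)..(T (r + 1)), Zf t :=
          Fin.sum_univ_eq_sum_range (fun r : ℕ => ∫ t in (T r)..(T (r + 1)), Zf t) K
      _ = _ := hzsplit
  have hdfin : ∑ k : Fin K, (∫ t in (τ k.castSucc)..(τ k.succ), Df t)
      = ∫ t in (τ 0)..(τ (Fin.last K)), Df t := by
    calc ∑ k : Fin K, (∫ t in (τ k.castSucc)..(τ k.succ), Df t)
        = ∑ k : Fin K, (fun r : ℕ => ∫ t in (T r)..(T (r + 1)), Df t) k.val :=
          Finset.sum_congr rfl (fun k _ => by simp only [hTk, hTk1])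
      _ = ∑ r ∈ Finset.range K, ∫ t in (T r)..(T (r + 1)), Df t :=
          Fin.sum_univ_eq_sum_range (fun r : ℕ => ∫ t in (T r)..(T (r + 1)), Df t) K
      _ = _ := hdsplit
  have hG : ∀ i, γ i ^ 2 ≤ ⨆ i : Fin N, γ i ^ 2 := fun i =>
    le_ciSup (f := fun i : Fin N => γ i ^ 2) (Set.Finite.bddAbove (Set.finite_range _)) i
  have hdnonneg : ∀ k : Fin K, 0 ≤ ∫ t in (τ k.castSucc)..(τ k.succ), Df t := fun k =>
    intervalIntegral.integral_nonneg (hτ (Fin.castSucc_lt_succ (i := k))).le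
      (fun t _ => re_star_dot_nonneg (d t))
  calc (∫ t in (τ 0)..(τ (Fin.last K)), Zf t)
      = ∑ k : Fin K, ∫ t in (τ k.castSucc)..(τ k.succ), Zf t := hzfin.symm
    _ ≤ ∑ k : Fin K, (γ (σ k) ^ 2 * (∫ t in (τ k.castSucc)..(τ k.succ), Df t)
          + ((star (x (τ k.castSucc)) ⬝ᵥ (P (σ k)).mulVec (x (τ k.castSucc))).re
              - (star (x (τ k.succ)) ⬝ᵥ (P (σ k)).mulVec (x (τ k.succ))).re)) :=
        Finset.sum_le_sum (fun k _ => (interval_key k).2)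
    _ ≤ ∑ k : Fin K, ((⨆ i : Fin N, γ i ^ 2) * (∫ t in (τ k.castSucc)..(τ k.succ), Df t)
          + ((star (x (τ k.castSucc)) ⬝ᵥ (P (σ k)).mulVec (x (τ k.castSucc))).re
              - (star (x (τ k.succ)) ⬝ᵥ (P (σ k)).mulVec (x (τ k.succ))).re)) :=
        Finset.sum_le_sum (fun k _ => add_le_add
          (mul_le_mul_of_nonneg_right (hG (σ k)) (hdnonneg k)) le_rfl)
    _ = (⨆ i : Fin N, γ i ^ 2) * (∑ k : Fin K, ∫ t in (τ k.castSucc)..(τ k.succ), Df t)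
          + ∑ k : Fin K,
            ((star (x (τ k.castSucc)) ⬝ᵥ (P (σ k)).mulVec (x (τ k.castSucc))).re
              - (star (x (τ k.succ)) ⬝ᵥ (P (σ k)).mulVec (x (τ k.succ))).re) := by
        rw [Finset.sum_add_distrib, Finset.mul_sum]
    _ = _ := by rw [hdfin]
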